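/- The series W = Σ_{k=1}^∞ (p_k + p_{k+1})/p_k² converges, and its value satisfies 5.9157 < W < 5.9158. -/

import Mathlib

/-!
Since `p (k+2) ≤ 3 p (k+1)` and `p (k+1) ≥ 2 ^ k`, the `k`-th term is at most
`4 / p (k+1) ≤ 4 (1/2) ^ k`. So the series converges, and it lies between its 17-th partial sum
and that sum plus the geometric tail `8 (1/2) ^ 17`; both bounds are explicit rationals inside
`(5.9157, 5.9158)`.
-/

/-- The Pell numbers: `p 0 = 0`, `p 1 = 1`, `p 2 = 2`, `p (n+2) = 2 p (n+1) + p n`. -/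
def pell : ℕ → ℤ
  | 0 => 0
  | 1 => 1
  | (n+2) => 2 * pell (n+1) + pell n

open Finset

theorem tsum_le_sum_range_add_of_le_geometric {f : ℕ → ℝ} {C r : ℝ} (hf : ∀ k, 0 ≤ f k)
    (hr₀ : 0 ≤ r) (hr₁ : r < 1) (hfC : ∀ k, f k ≤ C * r ^ k) (n : ℕ) :
    ∑' k, f k ≤ ∑ k ∈ range n, f k + C * r ^ n / (1 - r) := by
  have hgeo : Summable fun k => r ^ k := summable_geometric_of_lt_one hr₀ hr₁
  have hsum : Summable f := .of_nonneg_of_le hf hfC (hgeo.mul_left C)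
  have htail : ∑' k, f (k + n) ≤ C * r ^ n / (1 - r) :=
    calc ∑' k, f (k + n) ≤ ∑' k, C * r ^ n * r ^ k :=
          Summable.tsum_le_tsum (fun k => by rw [mul_assoc, ← pow_add, add_comm n]; exact hfC _)
            ((summable_nat_add_iff n).2 hsum) (hgeo.mul_left _)
      _ = C * r ^ n / (1 - r) := by
          rw [tsum_mul_left, tsum_geometric_of_lt_one hr₀ hr₁, div_eq_mul_inv]
  rw [← hsum.sum_add_tsum_nat_add n]
  linarith

theorem pell_nonneg : ∀ n, 0 ≤ pell n
  | 0 => le_rfl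
  | 1 => zero_le_one
  | n + 2 => by
    have := pell_nonneg n
    have := pell_nonneg (n + 1)
    rw [pell]
    linarith

theorem pell_le_pell_succ : ∀ n, pell n ≤ pell (n + 1)
  | 0 => zero_le_one
  | n + 1 => by
    have := pell_nonneg n
    have := pell_nonneg (n + 1)
    rw [pell]
    linarith

theorem two_pow_le_pell_succ : ∀ n, (2 : ℤ) ^ n ≤ pell (n + 1)
  | 0 => le_rfl
  | n + 1 => by
    have := two_pow_le_pell_succ n
    have := pell_nonneg n
    rw [pell, pow_succ]
    linarith

theorem pell_succ_pos (n : ℕ) : 0 < pell (n + 1) :=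
  (pow_pos two_pos n).trans_le (two_pow_le_pell_succ n)

theorem pell_add_two_le_three_mul (n : ℕ) : pell (n + 2) ≤ 3 * pell (n + 1) := by
  have := pell_le_pell_succ n
  rw [pell]
  linarith

noncomputable def pellTerm (k : ℕ) : ℝ :=
  ((pell (k + 1) : ℝ) + (pell (k + 2) : ℝ)) / (pell (k + 1) : ℝ) ^ 2

theorem pellTerm_nonneg (k : ℕ) : 0 ≤ pellTerm k := by
  have := pell_nonneg (k + 1)
  have := pell_nonneg (k + 2)
  unfold pellTerm
  positivity

theorem pellTerm_le (k : ℕ) : pellTerm k ≤ 4 * (1 / 2) ^ k := by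
  have hpos : (0 : ℝ) < pell (k + 1) := by exact_mod_cast pell_succ_pos k
  have hnum : (pell (k + 1) : ℝ) + pell (k + 2) ≤ 4 * pell (k + 1) := by
    have := pell_add_two_le_three_mul k
    have : pell (k + 1) + pell (k + 2) ≤ 4 * pell (k + 1) := by linarith
    exact_mod_cast this
  have hpow : (2 : ℝ) ^ k ≤ pell (k + 1) := by exact_mod_cast two_pow_le_pell_succ k
  calc pellTerm k ≤ 4 * pell (k + 1) / (pell (k + 1) : ℝ) ^ 2 := by unfold pellTerm; gcongr
    _ = 4 / pell (k + 1) := by field_simp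
    _ ≤ 4 / 2 ^ k := by gcongr
    _ = 4 * (1 / 2) ^ k := by rw [one_div_pow, div_eq_mul_one_div]

theorem summable_pellTerm : Summable pellTerm :=
  .of_nonneg_of_le pellTerm_nonneg pellTerm_le
    ((summable_geometric_of_lt_one (by norm_num) (by norm_num)).mul_left 4)

theorem stmt_7 :
    Summable (fun k : ℕ => ((pell (k+1) : ℝ) + (pell (k+2) : ℝ)) / (pell (k+1) : ℝ) ^ 2) ∧
    5.9157 < ∑' k : ℕ, ((pell (k+1) : ℝ) + (pell (k+2) : ℝ)) / (pell (k+1) : ℝ) ^ 2 ∧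
    ∑' k : ℕ, ((pell (k+1) : ℝ) + (pell (k+2) : ℝ)) / (pell (k+1) : ℝ) ^ 2 < 5.9158 := by
  change Summable pellTerm ∧ 5.9157 < ∑' k, pellTerm k ∧ ∑' k, pellTerm k < 5.9158
  refine ⟨summable_pellTerm, ?_, ?_⟩
  · calc (5.9157 : ℝ) < ∑ k ∈ range 17, pellTerm k := by
          simp only [sum_range_succ, sum_range_zero, pellTerm, pell]
          norm_num
      _ ≤ ∑' k, pellTerm k := summable_pellTerm.sum_le_tsum _ fun k _ => pellTerm_nonneg k
  · calc ∑' k, pellTerm k ≤ ∑ k ∈ range 17, pellTerm k + 4 * (1 / 2) ^ 17 / (1 - 1 / 2) :=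
          tsum_le_sum_range_add_of_le_geometric pellTerm_nonneg (by norm_num) (by norm_num)
            pellTerm_le 17
      _ < 5.9158 := by
          simp only [sum_range_succ, sum_range_zero, pellTerm, pell]
          norm_num
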